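/- arXiv:1402.0967 — 2 statements merged into one kernel-verified Lean document; each statement's English description precedes it below -/
import Mathlib

section
/- Let (f,U) be a pair consisting of a smooth function f and a smooth vector field U on M satisfying the infinitesimal contact condition fθ + d(i_U θ) + i_U dθ = 0. Then, writing h = θ(U), one has f = −ξ(h) and U = hξ − φ(grad h). Consequently the map (f,U) ↦ θ(U) is a linear bijection between the space of such pairs and C^∞(M). -/
/-!
Abstract axiomatization of a compact orientable contact metric manifold
`(M, θ, ξ, φ, g)` of dimension `2m+1`.  The type `F` plays the role of the
algebra of smooth functions `C^∞(M)` and the type `V` plays the role of the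
space of smooth vector fields `Γ(TM)`.  All classical operators (metric,
Lie bracket, contact form, Reeb field, gradient, divergence, integration
against the volume form `μ = θ∧(dθ)^m`, the Levi-Civita connection and the
`L²`-orthogonal projection onto contact vector fields) are part of the data,
subject to their usual defining identities.
-/

structure ContactMetricManifold (F V : Type*) [CommRing F] [Algebra ℝ F]
    [AddCommGroup V] [Module ℝ V] : Type _ where
  /-- multiplication of a vector field by a function, `f·X` -/
  fsmul : F → V → V
  /-- the Riemannian metric `g` -/
  g : V → V → F
  /-- the Lie bracket of vector fields -/
  lie : V → V → V
  /-- the derivative `X(f)` of a function along a vector field -/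
  D : V → F → F
  /-- the contact form `θ` -/
  θ : V → F
  /-- the 2-form `dθ` -/
  dθ : V → V → F
  /-- the characteristic (Reeb) vector field `ξ` -/
  ξ : V
  /-- the `(1,1)`-tensor field `φ` -/
  φ : V → V
  /-- the gradient with respect to `g` -/
  grad : F → V
  /-- the divergence with respect to the volume form `μ = θ∧(dθ)^m` -/
  div : V → F
  /-- integration of functions against the volume form `μ = θ∧(dθ)^m` -/
  integral : F → ℝ
  /-- the Levi-Civita connection `∇` of `g` -/
  nabla : V → V → V
  /-- the `L²`-orthogonal projection onto the space of contact vector fields -/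
  Pe : V → V
  -- module and derivation axioms
  fsmul_one : ∀ X, fsmul 1 X = X
  fsmul_add_fun : ∀ f h X, fsmul (f + h) X = fsmul f X + fsmul h X
  fsmul_add_vec : ∀ f X Y, fsmul f (X + Y) = fsmul f X + fsmul f Y
  fsmul_smul : ∀ (a : ℝ) f X, fsmul (a • f) X = a • fsmul f X
  lie_add_left : ∀ X Y Z, lie (X + Y) Z = lie X Z + lie Y Z
  lie_add_right : ∀ X Y Z, lie X (Y + Z) = lie X Y + lie X Z
  lie_skew : ∀ X Y, lie X Y = - lie Y X
  jacobi : ∀ X Y Z, lie X (lie Y Z) = lie (lie X Y) Z + lie Y (lie X Z)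
  D_add_fun : ∀ X f h, D X (f + h) = D X f + D X h
  D_add_vec : ∀ X Y f, D (X + Y) f = D X f + D Y f
  D_smul_vec : ∀ (a : ℝ) X f, D (a • X) f = a • D X f
  D_mul : ∀ X f h, D X (f * h) = D X f * h + f * D X h
  D_const : ∀ X (a : ℝ), D X (algebraMap ℝ F a) = 0
  D_fsmul : ∀ f X h, D (fsmul f X) h = f * D X h
  D_lie : ∀ X Y f, D (lie X Y) f = D X (D Y f) - D Y (D X f)
  θ_add : ∀ X Y, θ (X + Y) = θ X + θ Y
  θ_fsmul : ∀ f X, θ (fsmul f X) = f * θ X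
  g_symm : ∀ X Y, g X Y = g Y X
  g_add_left : ∀ X Y Z, g (X + Y) Z = g X Z + g Y Z
  g_fsmul_left : ∀ f X Y, g (fsmul f X) Y = f * g X Y
  g_smul_left : ∀ (a : ℝ) X Y, g (a • X) Y = a • g X Y
  g_nondeg : ∀ X, (∀ Y, g X Y = 0) → X = 0
  -- contact metric axioms
  θ_ξ : θ ξ = 1
  dθ_ξ : ∀ X, dθ ξ X = 0
  g_ξ : ∀ X, g X ξ = θ X
  φ_φ : ∀ X, φ (φ X) = - X + fsmul (θ X) ξ
  dθ_g_φ : ∀ X Y, dθ X Y = g X (φ Y)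
  dθ_eval : ∀ X Y, dθ X Y = D X (θ Y) - D Y (θ X) - θ (lie X Y)
  grad_spec : ∀ f X, g (grad f) X = D X f
  /-- divergence theorem: `∫ (X f + f div X) dμ = 0` -/
  div_spec : ∀ X f, integral (D X f + div X * f) = 0
  -- integration axioms
  integral_add : ∀ f h, integral (f + h) = integral f + integral h
  integral_smul : ∀ (a : ℝ) f, integral (a • f) = a * integral f
  integral_sq_nonneg : ∀ f, 0 ≤ integral (f * f)
  integral_sq_eq_zero : ∀ f, integral (f * f) = 0 → f = 0
  -- Levi-Civita connection axioms
  nabla_torsion_free : ∀ X Y, nabla X Y - nabla Y X = lie X Y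
  nabla_metric : ∀ X Y Z, D X (g Y Z) = g (nabla X Y) Z + g Y (nabla X Z)
  -- axioms of the `L²`-orthogonal projection onto contact fields
  Pe_contact : ∀ X Y, D (Pe X) (θ Y) = θ (lie (Pe X) Y)
  Pe_fix : ∀ X, (∀ Y, D X (θ Y) = θ (lie X Y)) → Pe X = X
  Pe_orth : ∀ X W, (∀ Y, D W (θ Y) = θ (lie W Y)) → integral (g (X - Pe X) W) = 0

namespace ContactMetricManifold

variable {F V : Type*} [CommRing F] [Algebra ℝ F] [AddCommGroup V] [Module ℝ V]
variable (C : ContactMetricManifold F V)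

/-- the Laplacian `Δ = −div ∘ grad` -/
def lap (f : F) : F := - C.div (C.grad f)

/-- the inertia operator `D = 1 + Δ` -/
def Dop (f : F) : F := f + C.lap f

/-- the contact vector field `X_f = f ξ − φ(grad f)` with contact Hamiltonian `f` -/
def Xf (f : F) : V := C.fsmul f C.ξ - C.φ (C.grad f)

/-- the Lagrange bracket `[f,h] = X_f(h)` of contact Hamiltonians -/
def Lb (f h : F) : F := C.D (C.Xf f) h

/-- `X` is a contact vector field: `L_X θ = 0` -/
def IsContact (X : V) : Prop := ∀ Y, C.D X (C.θ Y) = C.θ (C.lie X Y)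

/-- the bi-invariant pairing `⟨X_f, X_h⟩_e = ∫_M f·h dμ`, written via `f = θ(X_f)` -/
def innerθ (X Y : V) : ℝ := C.integral (C.θ X * C.θ Y)

/-- the `L²` pairing `(X,Y)_e = ∫_M g(X,Y) dμ` -/
def innerL2 (X Y : V) : ℝ := C.integral (C.g X Y)

/-- the metric is `K`-contact: `L_ξ g = 0` -/
def KContact : Prop :=
  ∀ X Y, C.D C.ξ (C.g X Y) = C.g (C.lie C.ξ X) Y + C.g X (C.lie C.ξ Y)

end ContactMetricManifold

section Aux

namespace ContactMetricManifold

variable {F V : Type*} [CommRing F] [Algebra ℝ F] [AddCommGroup V] [Module ℝ V]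
variable (C : ContactMetricManifold F V)

lemma theta_eq (X : V) : C.θ X = C.g X C.ξ := (C.g_ξ X).symm

lemma g_neg_left' (X Y : V) : C.g (-X) Y = - C.g X Y := by
  rw [← neg_one_smul ℝ X, C.g_smul_left]; simp

lemma g_sub_left' (X Y Z : V) : C.g (X - Y) Z = C.g X Z - C.g Y Z := by
  rw [sub_eq_add_neg, C.g_add_left, C.g_neg_left', sub_eq_add_neg]

lemma theta_neg (X : V) : C.θ (-X) = - C.θ X := by
  rw [theta_eq, theta_eq, g_neg_left']

lemma theta_sub (X Y : V) : C.θ (X - Y) = C.θ X - C.θ Y := by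
  rw [theta_eq, theta_eq, theta_eq, g_sub_left']

lemma theta_smul (a : ℝ) (X : V) : C.θ (a • X) = a • C.θ X := by
  rw [theta_eq, theta_eq, C.g_smul_left]

lemma dtheta_skew (X Y : V) : C.dθ X Y = - C.dθ Y X := by
  rw [C.dθ_eval, C.dθ_eval, C.lie_skew Y X, theta_neg]; ring

lemma dtheta_Xxi (X : V) : C.dθ X C.ξ = 0 := by
  rw [dtheta_skew, C.dθ_ξ, neg_zero]

lemma theta_phi (X : V) : C.θ (C.φ X) = 0 := by
  rw [theta_eq, C.g_symm, ← C.dθ_g_φ, C.dθ_ξ]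

lemma g_phi_skew (X Y : V) : C.g (C.φ X) Y = - C.g X (C.φ Y) := by
  rw [C.g_symm, ← C.dθ_g_φ, dtheta_skew, C.dθ_g_φ]

/-- Key structure result for a single pair. -/
lemma main_pair (f : F) (U : V)
    (hc : ∀ Y : V, f * C.θ Y + C.D Y (C.θ U) + C.dθ U Y = 0) :
    f = - C.D C.ξ (C.θ U) ∧
      U = C.fsmul (C.θ U) C.ξ - C.φ (C.grad (C.θ U)) := by
  set h := C.θ U with hh
  constructor
  · have H := hc C.ξ
    rw [C.θ_ξ, mul_one, dtheta_Xxi] at H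
    linear_combination H
  · have key : ∀ Z : V, C.g (U - (C.fsmul h C.ξ - C.φ (C.grad h))) Z = 0 := by
      intro Z
      have H := hc (C.φ Z)
      rw [theta_phi, mul_zero, zero_add, C.dθ_g_φ, C.φ_φ] at H
      -- H : D (φ Z) h + g U (-Z + fsmul (θ Z) ξ) = 0
      have hU2 : C.g U (-Z + C.fsmul (C.θ Z) C.ξ) = - C.g U Z + C.θ Z * h := by
        rw [C.g_symm, C.g_add_left, g_neg_left', C.g_fsmul_left, C.g_symm C.ξ U,
          C.g_ξ U, ← hh, C.g_symm Z U]
      rw [hU2] at H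
      have hD : C.D (C.φ Z) h = C.g (C.grad h) (C.φ Z) := (C.grad_spec h (C.φ Z)).symm
      rw [hD] at H
      rw [g_sub_left', g_sub_left', C.g_fsmul_left, C.g_symm C.ξ Z, C.g_ξ Z,
        g_phi_skew]
      linear_combination -H
    have := C.g_nondeg _ key
    exact sub_eq_zero.mp this

end ContactMetricManifold
end Aux

open ContactMetricManifold in
/-- If a pair `(f,U)` of a smooth function and a smooth vector
field satisfies the infinitesimal contact condition
`f·θ + d(i_U θ) + i_U dθ = 0` (evaluated on an arbitrary field `Y`), then, with
`h = θ(U)`, one has `f = −ξ(h)` and `U = hξ − φ(grad h)`.  Consequently the set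
of such pairs is a linear subspace of `C^∞(M) ⊕ Γ(TM)` and the map
`(f,U) ↦ θ(U)` is a linear bijection from this subspace onto `C^∞(M)`. -/
theorem infinitesimal_contact_pairs
    {F V : Type*} [CommRing F] [Algebra ℝ F] [AddCommGroup V] [Module ℝ V]
    (C : ContactMetricManifold F V) :
    (∀ p : F × V, (∀ Y : V, p.1 * C.θ Y + C.D Y (C.θ p.2) + C.dθ p.2 Y = 0) →
        p.1 = - C.D C.ξ (C.θ p.2) ∧
        p.2 = C.fsmul (C.θ p.2) C.ξ - C.φ (C.grad (C.θ p.2))) ∧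
    (∀ p q : F × V,
        (∀ Y : V, p.1 * C.θ Y + C.D Y (C.θ p.2) + C.dθ p.2 Y = 0) →
        (∀ Y : V, q.1 * C.θ Y + C.D Y (C.θ q.2) + C.dθ q.2 Y = 0) →
        (∀ Y : V, (p + q).1 * C.θ Y + C.D Y (C.θ (p + q).2) + C.dθ (p + q).2 Y = 0)) ∧
    (∀ (a : ℝ) (p : F × V),
        (∀ Y : V, p.1 * C.θ Y + C.D Y (C.θ p.2) + C.dθ p.2 Y = 0) →
        (∀ Y : V, (a • p).1 * C.θ Y + C.D Y (C.θ (a • p).2) + C.dθ (a • p).2 Y = 0)) ∧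
    Function.Bijective
      (fun p : {p : F × V // ∀ Y : V, p.1 * C.θ Y + C.D Y (C.θ p.2) + C.dθ p.2 Y = 0} =>
        C.θ p.1.2) := by
    classical
  have main := C.main_pair
  have surj_aux : ∀ h : F,
      (∀ Y : V, (- C.D C.ξ h) * C.θ Y + C.D Y (C.θ (C.fsmul h C.ξ - C.φ (C.grad h)))
        + C.dθ (C.fsmul h C.ξ - C.φ (C.grad h)) Y = 0) ∧
      C.θ (C.fsmul h C.ξ - C.φ (C.grad h)) = h := by
    intro h
    have hθ : C.θ (C.fsmul h C.ξ - C.φ (C.grad h)) = h := by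
      rw [C.theta_sub, C.θ_fsmul, C.θ_ξ, mul_one, C.theta_phi, sub_zero]
    refine ⟨?_, hθ⟩
    intro Y
    rw [hθ, C.dθ_g_φ, C.g_sub_left', C.g_fsmul_left, C.g_symm C.ξ (C.φ Y),
      C.g_ξ, C.theta_phi, mul_zero, C.g_phi_skew, ← C.dθ_g_φ, C.dθ_g_φ, C.φ_φ]
    have e1 : C.g (C.grad h) (-Y + C.fsmul (C.θ Y) C.ξ)
        = - C.D Y h + C.θ Y * C.D C.ξ h := by
      rw [C.g_symm, C.g_add_left, C.g_neg_left', C.g_fsmul_left,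
        C.g_symm C.ξ (C.grad h), C.grad_spec, C.g_symm Y (C.grad h), C.grad_spec]
    rw [e1]
    ring
  refine ⟨fun p hp => main p.1 p.2 hp, ?_, ?_, ?_, ?_⟩
  · intro p q hp hq Y
    have hθ : C.θ ((p + q).2) = C.θ p.2 + C.θ q.2 := C.θ_add p.2 q.2
    show (p.1 + q.1) * C.θ Y + C.D Y (C.θ (p.2 + q.2)) + C.dθ (p.2 + q.2) Y = 0
    rw [C.θ_add, C.D_add_fun, C.dθ_g_φ, C.g_add_left, ← C.dθ_g_φ, ← C.dθ_g_φ]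
    linear_combination hp Y + hq Y
  · intro a p hp Y
    show (a • p.1) * C.θ Y + C.D Y (C.θ (a • p.2)) + C.dθ (a • p.2) Y = 0
    rw [C.theta_smul, Algebra.smul_def a (C.θ p.2), C.D_mul, C.D_const, zero_mul,
      zero_add, ← Algebra.smul_def, C.dθ_g_φ, C.g_smul_left, ← C.dθ_g_φ,
      smul_mul_assoc, ← smul_add, ← smul_add, hp Y, smul_zero]
  · intro p q hpq
    have hp := main p.1.1 p.1.2 p.2
    have hq := main q.1.1 q.1.2 q.2
    have hθ : C.θ p.1.2 = C.θ q.1.2 := hpq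
    apply Subtype.ext
    have h2 : p.1.2 = q.1.2 := by
      rw [hp.2, hq.2, hθ]
    have h1 : p.1.1 = q.1.1 := by
      rw [hp.1, hq.1, hθ]
    exact Prod.ext h1 h2
  · intro h
    exact ⟨⟨(- C.D C.ξ h, C.fsmul h C.ξ - C.φ (C.grad h)), (surj_aux h).1⟩,
      (surj_aux h).2⟩
end

section
/- For contact vector fields X_f = fξ − φ(grad f) and X_h = hξ − φ(grad h) on M, the L²-inner product of vector fields satisfies ∫_M g(X_f, X_h) dμ = ∫_M (f + Δf)·h dμ, where Δ = −div∘grad is the Laplacian. In other words, (X_f, X_h)_e = ⟨X_{f+Δf}, X_h⟩_e, where ⟨X_f, X_h⟩_e = ∫_M f h dμ. -/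
section Aux

variable {F V : Type*} [CommRing F] [Algebra ℝ F] [AddCommGroup V] [Module ℝ V]
variable (C : ContactMetricManifold F V)

lemma aux_g_neg_left (X Y : V) : C.g (-X) Y = - C.g X Y := by
  rw [← neg_one_smul ℝ X, C.g_smul_left]; simp

lemma aux_g_sub_left (X Y Z : V) : C.g (X - Y) Z = C.g X Z - C.g Y Z := by
  rw [sub_eq_add_neg, C.g_add_left, aux_g_neg_left, sub_eq_add_neg]

lemma aux_g_sub_right (X Y Z : V) : C.g X (Y - Z) = C.g X Y - C.g X Z := by
  rw [C.g_symm, aux_g_sub_left, C.g_symm Y X, C.g_symm Z X]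

lemma aux_θ_smul (a : ℝ) (X : V) : C.θ (a • X) = a • C.θ X := by
  have h1 : a • X = C.fsmul (a • (1 : F)) X := by
    rw [C.fsmul_smul, C.fsmul_one]
  rw [h1, C.θ_fsmul, smul_mul_assoc, one_mul]

lemma aux_θ_neg (X : V) : C.θ (-X) = - C.θ X := by
  rw [← neg_one_smul ℝ X, aux_θ_smul]; simp

lemma aux_θ_sub (X Y : V) : C.θ (X - Y) = C.θ X - C.θ Y := by
  rw [sub_eq_add_neg, C.θ_add, aux_θ_neg, sub_eq_add_neg]

lemma aux_θ_φ (X : V) : C.θ (C.φ X) = 0 := by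
  have h1 := C.dθ_ξ X
  rw [C.dθ_g_φ] at h1
  rw [← C.g_ξ, C.g_symm, h1]

lemma aux_dθ_skew (X Y : V) : C.dθ X Y = - C.dθ Y X := by
  rw [C.dθ_eval, C.dθ_eval, C.lie_skew Y X, aux_θ_neg]; ring

lemma aux_g_φ_φ (X Y : V) :
    C.g (C.φ X) (C.φ Y) = C.g X Y - C.θ X * C.θ Y := by
  have h1 : C.g (C.φ X) (C.φ Y) = C.dθ (C.φ X) Y := (C.dθ_g_φ _ _).symm
  rw [h1, aux_dθ_skew, C.dθ_g_φ, C.φ_φ, C.g_symm, C.g_add_left, aux_g_neg_left,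
    C.g_fsmul_left, C.g_symm C.ξ Y, C.g_ξ, C.g_symm X Y]
  ring

lemma aux_integral_neg (f : F) : C.integral (-f) = - C.integral f := by
  rw [← neg_one_smul ℝ f, C.integral_smul]; ring

end Aux

open ContactMetricManifold in
/-- For contact vector fields `X_f = fξ − φ(grad f)` and
`X_h = hξ − φ(grad h)`, the `L²`-inner product satisfies
`∫_M g(X_f, X_h) dμ = ∫_M (f + Δf)·h dμ`, where `Δ = −div∘grad`; in other
words `(X_f, X_h)_e = ⟨X_{f+Δf}, X_h⟩_e`, where `⟨X_f, X_h⟩_e = ∫_M f·h dμ`. -/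
theorem l2_metric_versus_biinvariant_metric
    {F V : Type*} [CommRing F] [Algebra ℝ F] [AddCommGroup V] [Module ℝ V]
    (C : ContactMetricManifold F V) (f h : F)
    (hf : C.D C.ξ f = 0) (hh : C.D C.ξ h = 0) :
    C.integral (C.g (C.Xf f) (C.Xf h)) = C.integral ((f + C.lap f) * h) ∧
    C.innerL2 (C.Xf f) (C.Xf h) = C.innerθ (C.Xf (f + C.lap f)) (C.Xf h) := by
  -- θ of a contact field Xf k is k
  have θXf : ∀ k : F, C.θ (C.Xf k) = k := by
    intro k
    rw [Xf, aux_θ_sub, C.θ_fsmul, C.θ_ξ, aux_θ_φ, mul_one, sub_zero]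
  -- θ(grad f) = 0 (and same for h), from ξ(f) = 0
  have θgrad : ∀ k : F, C.D C.ξ k = 0 → C.θ (C.grad k) = 0 := by
    intro k hk
    rw [← C.g_ξ, C.grad_spec, hk]
  -- g(ξ, φ X) = 0
  have gξφ : ∀ X : V, C.g C.ξ (C.φ X) = 0 := by
    intro X
    rw [C.g_symm, C.g_ξ, aux_θ_φ]
  -- pointwise formula
  have key : C.g (C.Xf f) (C.Xf h) = f * h + C.D (C.grad f) h := by
    rw [Xf, Xf, aux_g_sub_left, aux_g_sub_right, aux_g_sub_right,
      C.g_fsmul_left, C.g_fsmul_left, C.g_symm (C.φ (C.grad f)) (C.fsmul h C.ξ),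
      C.g_fsmul_left, gξφ, gξφ, C.g_symm C.ξ (C.fsmul h C.ξ), C.g_fsmul_left,
      C.g_ξ, C.θ_ξ, aux_g_φ_φ, θgrad f hf, θgrad h hh]
    have hgg : C.g (C.grad f) (C.grad h) = C.D (C.grad f) h := by
      rw [C.g_symm, C.grad_spec]
    rw [hgg]; ring
  -- integral of D(grad f) h equals integral of lap f * h
  have hdiv := C.div_spec (C.grad f) h
  rw [C.integral_add] at hdiv
  have hint : C.integral (C.D (C.grad f) h) = C.integral (C.lap f * h) := by
    have : C.lap f * h = -(C.div (C.grad f) * h) := by rw [lap]; ring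
    rw [this, aux_integral_neg]; linarith
  have main : C.integral (C.g (C.Xf f) (C.Xf h)) = C.integral ((f + C.lap f) * h) := by
    have h1 : (f + C.lap f) * h = f * h + C.lap f * h := by ring
    rw [key, h1, C.integral_add, C.integral_add, hint]
  refine ⟨main, ?_⟩
  rw [innerL2, innerθ, θXf, θXf, main, lap]
end
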